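/- Let G = (A ∪ P, E) be a bipartite graph, M a maximum matching in G, let a be a vertex matched in M with partner p = M(a), and let H be obtained from G by deleting a and all edges incident on a. Then the maximum matching size of H equals the maximum matching size of G if and only if p is odd with respect to M in G; and if p is even or unreachable with respect to M in G, then M \ {(a, p)} is a maximum matching of H (so the maximum matching size drops by exactly one). -/

import Mathlib

open SimpleGraph

variable {V : Type*}

/-- `M` is a matching in the graph `G`: a set of edges of `G` no two of which
share a vertex. -/
def IsMatchingIn (G : SimpleGraph V) (M : Set (Sym2 V)) : Prop :=
  M ⊆ G.edgeSet ∧ ∀ e ∈ M, ∀ f ∈ M, e ≠ f → ∀ v : V, v ∈ e → v ∉ f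

/-- A vertex `v` is matched (covered) by the matching `M`. -/
def IsMatchedBy (M : Set (Sym2 V)) (v : V) : Prop :=
  ∃ e ∈ M, v ∈ e

/-- The list of edges of a path given as a list of vertices. -/
def pathEdges (p : List V) : List (Sym2 V) :=
  (p.zip p.tail).map fun q => s(q.1, q.2)

/-- `p` is an alternating path from `u` to `v` in `G` with respect to the matching `M`:
its consecutive vertices are adjacent in `G`, it repeats no vertex, and its edges
alternate between edges in `M` and edges not in `M`. -/
def IsAltPath (G : SimpleGraph V) (M : Set (Sym2 V)) (u v : V) (p : List V) : Prop :=
  p.Chain' G.Adj ∧ p.Nodup ∧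
    (pathEdges p).Chain' (fun e f => (e ∈ M ↔ f ∉ M)) ∧
    p.head? = some u ∧ p.getLast? = some v

/-- `v` is even with respect to `M`: there is an even-length alternating path from
an `M`-unmatched vertex to `v`. -/
def EvenVtx (G : SimpleGraph V) (M : Set (Sym2 V)) (v : V) : Prop :=
  ∃ u p, ¬ IsMatchedBy M u ∧ IsAltPath G M u v p ∧ Even (pathEdges p).length

/-- `v` is odd with respect to `M`: there is an odd-length alternating path from
an `M`-unmatched vertex to `v`. -/
def OddVtx (G : SimpleGraph V) (M : Set (Sym2 V)) (v : V) : Prop :=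
  ∃ u p, ¬ IsMatchedBy M u ∧ IsAltPath G M u v p ∧ Odd (pathEdges p).length

/-- `v` is unreachable with respect to `M`: there is no alternating path from any
`M`-unmatched vertex to `v`. -/
def UnreachableVtx (G : SimpleGraph V) (M : Set (Sym2 V)) (v : V) : Prop :=
  ¬ ∃ u p, ¬ IsMatchedBy M u ∧ IsAltPath G M u v p

/-- `M` is a maximum (cardinality) matching in `G`. -/
def IsMaxMatching (G : SimpleGraph V) (M : Set (Sym2 V)) : Prop :=
  IsMatchingIn G M ∧ ∀ N, IsMatchingIn G N → N.ncard ≤ M.ncard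

/-- `G` is bipartite with the two sides given by `side`. -/
def IsBipartiteWith (G : SimpleGraph V) (side : V → Bool) : Prop :=
  ∀ u v, G.Adj u v → side u ≠ side v

/-- The maximum matching size of `G`. -/
noncomputable def matchNum (G : SimpleGraph V) : ℕ :=
  sSup {n | ∃ M, IsMatchingIn G M ∧ n = M.ncard}

/-!
Deleting `a` keeps the matching `M \ {s(a, p)}`, so the matching number drops by at most one, and
it does not drop iff some matching of size `|M|` misses `a`.

If `p` is odd, an odd alternating path to `p` avoids `a` (otherwise the `M`-edge `s(a, p)` would
lie on it, but the path enters `p` by an edge outside `M`), so after deleting `a` it augments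
`M \ {s(a, p)}`. Conversely, if a matching `N` of size `|M|` misses `a`, walk from `a` along edges
of `M \ N` and of `N \ M` in turn for as long as possible. Ending at an `N`-unmatched vertex
would give an `N`-augmenting path, so the walk ends at an `M`-unmatched vertex, and read backwards
it is an odd alternating path to `p`.

In a bipartite graph no vertex is both even and odd with respect to a maximum matching: the two
paths would join into an odd alternating walk between unmatched vertices, and bipartiteness lets
one cut the even cycles out of such a walk until it is an augmenting path.
-/

theorem IsMatchingIn.eq_of_mem {G : SimpleGraph V} {M : Set (Sym2 V)} (hM : IsMatchingIn G M)
    {e f : Sym2 V} {v : V} (he : e ∈ M) (hf : f ∈ M) (hve : v ∈ e) (hvf : v ∈ f) : e = f :=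
  by_contra fun hne => hM.2 e he f hf hne v hve hvf

/-- A walk is encoded as `f : ℕ → V` together with its length `n`: its vertices are
`f 0, …, f n` and its `t`-th edge is `s(f t, f (t + 1))`. An alternating walk starts with an
edge outside `M`. -/
def IsAltWalk (G : SimpleGraph V) (M : Set (Sym2 V)) (f : ℕ → V) (n : ℕ) : Prop :=
  ∀ t < n, G.Adj (f t) (f (t + 1)) ∧ (s(f t, f (t + 1)) ∈ M ↔ Odd t)

structure IsAugWalk (G : SimpleGraph V) (M : Set (Sym2 V)) (f : ℕ → V) (n : ℕ) : Prop where
  alt : IsAltWalk G M f n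
  odd : Odd n
  unmatched_start : ¬IsMatchedBy M (f 0)
  unmatched_end : ¬IsMatchedBy M (f n)

section Walk

variable {G : SimpleGraph V} {M : Set (Sym2 V)} {f : ℕ → V} {n : ℕ}

theorem mem_edge_iff_of_injOn (hf : Set.InjOn f (Set.Iic n)) {i t : ℕ} (hi : i ≤ n)
    (ht : t < n) : f i ∈ s(f t, f (t + 1)) ↔ i = t ∨ i = t + 1 := by
  rw [Sym2.mem_iff]
  constructor
  · rintro (h | h)
    · exact .inl (hf (Set.mem_Iic.2 hi) (Set.mem_Iic.2 ht.le) h)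
    · exact .inr (hf (Set.mem_Iic.2 hi) (Set.mem_Iic.2 ht) h)
  · rintro (rfl | rfl) <;> simp

theorem injOn_edge_of_injOn (hf : Set.InjOn f (Set.Iic n)) :
    Set.InjOn (fun t => s(f t, f (t + 1))) (Set.Iio n) := by
  intro i hi j hj hij
  have hi' : i < n := hi
  have hj' : j < n := hj
  replace hij : s(f i, f (i + 1)) = s(f j, f (j + 1)) := hij
  have h := (mem_edge_iff_of_injOn hf hi'.le hj').1 (hij ▸ Sym2.mem_mk_left _ _)
  have h' := (mem_edge_iff_of_injOn hf hi' hj').1 (hij ▸ Sym2.mem_mk_right _ _)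
  omega

theorem IsAltWalk.exists_odd_edge_eq (hM : IsMatchingIn G M) (hf : IsAltWalk G M f n)
    {e : Sym2 V} (he : e ∈ M) {j : ℕ} (hj : f j ∈ e) (h0 : 0 < j) (hjn : j < n) :
    ∃ t < n, Odd t ∧ (j = t ∨ j = t + 1) ∧ e = s(f t, f (t + 1)) := by
  obtain ⟨t, htn, hodd, hjt⟩ : ∃ t < n, Odd t ∧ (j = t ∨ j = t + 1) := by
    rcases Nat.even_or_odd j with hev | hodd
    · exact ⟨j - 1, by omega, Nat.Even.sub_odd h0 hev odd_one, .inr (by omega)⟩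
    · exact ⟨j, hjn, hodd, .inl rfl⟩
  refine ⟨t, htn, hodd, hjt, hM.eq_of_mem he ((hf t htn).2.2 hodd) hj ?_⟩
  rcases hjt with rfl | rfl <;> simp

end Walk

section Augment

variable {G : SimpleGraph V} {M : Set (Sym2 V)} {f : ℕ → V} {k : ℕ}

/-- For an alternating walk of length `2 * k + 1` this is the symmetric difference of `M` with the
walk's edges: the edges `1, 3, …, 2 * k - 1` leave, the edges `0, 2, …, 2 * k` enter. -/
def augment (M : Set (Sym2 V)) (f : ℕ → V) (k : ℕ) : Set (Sym2 V) :=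
  (M \ (fun i => s(f (2 * i + 1), f (2 * i + 1 + 1))) '' Set.Iio k) ∪
    (fun i => s(f (2 * i), f (2 * i + 1))) '' Set.Iio (k + 1)

theorem isMatchingIn_augment (hM : IsMatchingIn G M) (hf : IsAugWalk G M f (2 * k + 1))
    (hinj : Set.InjOn f (Set.Iic (2 * k + 1))) : IsMatchingIn G (augment M f k) := by
  have hmem {v i} (hi : i < k + 1) (hv : v ∈ s(f (2 * i), f (2 * i + 1))) :
      ∃ j ≤ 2 * k + 1, v = f j ∧ (j = 2 * i ∨ j = 2 * i + 1) := by
    rcases Sym2.mem_iff.1 hv with rfl | rfl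
    exacts [⟨2 * i, by omega, rfl, .inl rfl⟩, ⟨2 * i + 1, by omega, rfl, .inr rfl⟩]
  have hM_walk {e v i} (he : e ∈ M) (hve : v ∈ e) (hi : i < k + 1)
      (hv : v ∈ s(f (2 * i), f (2 * i + 1))) :
      e ∈ (fun i => s(f (2 * i + 1), f (2 * i + 1 + 1))) '' Set.Iio k := by
    obtain ⟨j, hj, rfl, -⟩ := hmem hi hv
    rcases Nat.eq_zero_or_pos j with rfl | hj0
    · exact absurd ⟨e, he, hve⟩ hf.unmatched_start
    rcases hj.lt_or_eq with hjn | rfl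
    · obtain ⟨t, htn, ⟨i', rfl⟩, -, rfl⟩ := hf.alt.exists_odd_edge_eq hM he hve hj0 hjn
      exact ⟨i', show i' < k by omega, rfl⟩
    · exact absurd ⟨e, he, hve⟩ hf.unmatched_end
  refine ⟨?_, ?_⟩
  · rintro e (⟨he, -⟩ | ⟨i, hi, rfl⟩)
    exacts [hM.1 he, (hf.alt (2 * i) (by simp at hi; omega)).1]
  rintro e (⟨he, heO⟩ | ⟨i, hi, rfl⟩) e' (⟨he', he'O⟩ | ⟨i', hi', rfl⟩) hne v hve
    hve'
  · exact hM.2 e he e' he' hne v hve hve'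
  · exact heO (hM_walk he hve hi' hve')
  · exact he'O (hM_walk he' hve' hi hve)
  · obtain ⟨j, hj, rfl, hji⟩ := hmem hi hve
    rw [mem_edge_iff_of_injOn hinj hj (by simp at hi'; omega)] at hve'
    exact hne (by congr; omega)

theorem ncard_augment (hMfin : M.Finite) (hf : IsAltWalk G M f (2 * k + 1))
    (hinj : Set.InjOn f (Set.Iic (2 * k + 1))) : (augment M f k).ncard = M.ncard + 1 := by
  have hedge := injOn_edge_of_injOn hinj
  set odd := (fun i => s(f (2 * i + 1), f (2 * i + 1 + 1))) '' Set.Iio k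
  set even := (fun i => s(f (2 * i), f (2 * i + 1))) '' Set.Iio (k + 1)
  have hodd : odd.ncard = k := by
    refine (Set.InjOn.ncard_image fun i hi j hj hij => ?_).trans (Set.ncard_Iio_nat k)
    have := hedge (show 2 * i + 1 < 2 * k + 1 by simp at hi; omega)
      (show 2 * j + 1 < 2 * k + 1 by simp at hj; omega) hij
    omega
  have heven : even.ncard = k + 1 := by
    refine (Set.InjOn.ncard_image fun i hi j hj hij => ?_).trans (Set.ncard_Iio_nat (k + 1))
    have := hedge (show 2 * i < 2 * k + 1 by simp at hi; omega)
      (show 2 * j < 2 * k + 1 by simp at hj; omega) hij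
    omega
  have hoddM : odd ⊆ M := by
    rintro _ ⟨i, hi, rfl⟩
    exact (hf (2 * i + 1) (by simp at hi; omega)).2.2 (odd_two_mul_add_one i)
  have hdisj : Disjoint (M \ odd) even := by
    rw [Set.disjoint_right]
    rintro _ ⟨i, hi, rfl⟩ ⟨he, -⟩
    exact Nat.not_odd_iff_even.2 (even_two_mul i) ((hf (2 * i) (by simp at hi; omega)).2.1 he)
  have hle : odd.ncard ≤ M.ncard := Set.ncard_le_ncard hoddM hMfin
  rw [augment, Set.ncard_union_eq hdisj hMfin.sdiff (Set.toFinite even),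
    Set.ncard_sdiff hoddM (hMfin.subset hoddM), heven]
  omega

theorem IsAugWalk.exists_ncard_eq_succ {n : ℕ} (hM : IsMatchingIn G M) (hMfin : M.Finite)
    (hf : IsAugWalk G M f n) (hinj : Set.InjOn f (Set.Iic n)) :
    ∃ M', IsMatchingIn G M' ∧ M'.ncard = M.ncard + 1 := by
  obtain ⟨k, rfl⟩ := hf.odd
  exact ⟨augment M f k, isMatchingIn_augment hM hf hinj, ncard_augment hMfin hf.alt hinj⟩

end Augment

section Bipartite

variable {G : SimpleGraph V} {M : Set (Sym2 V)} {f : ℕ → V} {n : ℕ}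

theorem IsBipartiteWith.side_eq_iff_even {side : V → Bool} (hG : IsBipartiteWith G side)
    (hf : ∀ t < n, G.Adj (f t) (f (t + 1))) {t : ℕ} (ht : t ≤ n) :
    side (f t) = side (f 0) ↔ Even t := by
  induction t with
  | zero => simp
  | succ t ih =>
    have hne := hG _ _ (hf t (by omega))
    rw [Nat.even_add_one, ← ih (by omega)]
    revert hne
    cases side (f (t + 1)) <;> cases side (f t) <;> cases side (f 0) <;> decide

theorem IsAltWalk.shortcut (hf : IsAltWalk G M f n) {i d : ℕ} (hid : i + d ≤ n) (hd : Even d)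
    (hfi : f i = f (i + d)) :
    IsAltWalk G M (fun t => if t ≤ i then f t else f (t + d)) (n - d) := by
  intro t ht
  dsimp only
  rcases lt_or_ge t i with hti | hit
  · simp only [if_pos hti.le, if_pos (show t + 1 ≤ i by omega)]
    exact hf t (by omega)
  · have h₀ : (if t ≤ i then f t else f (t + d)) = f (t + d) := by
      split_ifs with h
      · rwa [show t = i by omega]
      · rfl
    have h₁ : (if t + 1 ≤ i then f (t + 1) else f (t + 1 + d)) = f (t + d + 1) := by
      rw [if_neg (by omega), Nat.add_right_comm]
    rw [h₀, h₁]
    convert hf (t + d) (by omega) using 2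
    simp [Nat.odd_add, hd]

theorem IsMaxMatching.not_isAugWalk [Finite V] {side : V → Bool} (hG : IsBipartiteWith G side)
    (hM : IsMaxMatching G M) (f : ℕ → V) (n : ℕ) : ¬IsAugWalk G M f n := by
  induction n using Nat.strong_induction_on generalizing f with
  | _ n ih =>
  intro hf
  by_cases hinj : Set.InjOn f (Set.Iic n)
  · obtain ⟨M', hM', hcard⟩ := hf.exists_ncard_eq_succ hM.1 (Set.toFinite M) hinj
    have := hM.2 M' hM'
    omega
  -- a repeated vertex closes an even cycle, which can be cut out
  obtain ⟨i, j, hij, hjn, hfij⟩ : ∃ i j, i < j ∧ j ≤ n ∧ f i = f j := by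
    simp only [Set.InjOn, Set.mem_Iic, not_forall] at hinj
    obtain ⟨x, hx, y, hy, hxy, hne⟩ := hinj
    rcases lt_or_gt_of_ne hne with h | h
    exacts [⟨x, y, h, hy, hxy⟩, ⟨y, x, h, hx, hxy.symm⟩]
  have hadj : ∀ t < n, G.Adj (f t) (f (t + 1)) := fun t ht => (hf.alt t ht).1
  have hd : Even (j - i) := by
    have hi := hG.side_eq_iff_even hadj (show i ≤ n by omega)
    rw [hfij, hG.side_eq_iff_even hadj hjn] at hi
    exact (Nat.even_sub hij.le).2 hi
  refine ih (n - (j - i)) (by omega) (fun t => if t ≤ i then f t else f (t + (j - i)))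
    ⟨hf.alt.shortcut (by omega) hd (by rwa [Nat.add_sub_cancel' hij.le]),
      Nat.Odd.sub_even (by omega) hf.odd hd, by simpa using hf.unmatched_start, ?_⟩
  split_ifs with h
  · rw [show n - (j - i) = i by omega, hfij, show j = n by omega]
    exact hf.unmatched_end
  · rw [Nat.sub_add_cancel (by omega)]
    exact hf.unmatched_end

end Bipartite

section Paths

variable {G : SimpleGraph V} {M : Set (Sym2 V)}

theorem length_pathEdges (l : List V) : (pathEdges l).length = l.length - 1 := by
  simp [pathEdges]

theorem getElem_pathEdges (l : List V) {t : ℕ} (ht : t < (pathEdges l).length) :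
    (pathEdges l)[t] = s(l[t]'(by simp [length_pathEdges] at ht; omega),
      l[t + 1]'(by simp [length_pathEdges] at ht; omega)) := by
  simp [pathEdges]

theorem pathEdges_map_range (f : ℕ → V) (n : ℕ) :
    pathEdges ((List.range (n + 1)).map f) = (List.range n).map fun t => s(f t, f (t + 1)) :=
  List.ext_getElem (by simp [length_pathEdges]) fun t _ _ => by simp [getElem_pathEdges]

theorem IsAltPath.exists_isAltWalk {u v : V} {l : List V} (hl : IsAltPath G M u v l)
    (hu : ¬IsMatchedBy M u) :
    ∃ f, f 0 = u ∧ f (l.length - 1) = v ∧ Set.InjOn f (Set.Iic (l.length - 1)) ∧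
      IsAltWalk G M f (l.length - 1) := by
  obtain ⟨hadj, hnd, halt, hhead, hlast⟩ := hl
  have hl : 0 < l.length := List.length_pos_iff.2 (by rintro rfl; simp at hhead)
  have hf {t} (ht : t < l.length) : l.getD t u = l[t] := List.getD_eq_getElem _ _ ht
  have hu0 : l[0] = u := by simpa [List.head?_eq_getElem?, hl] using hhead
  refine ⟨(l.getD · u), by simp only [hf hl, hu0], ?_, fun i hi j hj hij => ?_, fun t ht => ?_⟩
  · rw [List.getLast?_eq_getElem?, List.getElem?_eq_getElem (by omega)] at hlast
    simpa only [hf (show l.length - 1 < l.length by omega)] using Option.some_inj.1 hlast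
  · simp only [Set.mem_Iic] at hi hj hij
    rwa [hf (by omega), hf (by omega), hnd.getElem_inj_iff] at hij
  simp only [hf (show t < l.length by omega), hf (show t + 1 < l.length by omega)]
  refine ⟨hadj.getElem t (by omega), ?_⟩
  induction t with
  | zero => exact iff_of_false (fun h => hu ⟨_, h, hu0 ▸ Sym2.mem_mk_left _ _⟩) (by simp)
  | succ t ih =>
    have h := halt.getElem t (by simp [length_pathEdges]; omega)
    simp only [getElem_pathEdges] at h
    rw [Nat.odd_add_one, ← ih (by omega), h, not_not]

theorem IsAltWalk.isAltPath_map_range {f : ℕ → V} {n : ℕ} (hf : IsAltWalk G M f n)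
    (hinj : Set.InjOn f (Set.Iic n)) : IsAltPath G M (f 0) (f n) ((List.range (n + 1)).map f) := by
  refine ⟨?_, ?_, ?_, by simp [List.head?_range], by simp [List.getLast?_eq_getElem?]⟩
  · exact List.isChain_iff_getElem.2 fun t ht => by simpa using (hf t (by simpa using ht)).1
  · refine List.Nodup.map_on (fun x hx y hy hxy => hinj ?_ ?_ hxy) List.nodup_range <;>
      simp_all
  · rw [pathEdges_map_range]
    refine List.isChain_iff_getElem.2 fun t ht => ?_
    simp only [List.length_map, List.length_range] at ht
    simp only [List.getElem_map, List.getElem_range, (hf t (by omega)).2,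
      (hf (t + 1) ht).2, Nat.odd_add_one, not_not]

theorem exists_altPath_iff {v : V} {P : ℕ → Prop} :
    (∃ u l, ¬IsMatchedBy M u ∧ IsAltPath G M u v l ∧ P (pathEdges l).length) ↔
      ∃ f n, ¬IsMatchedBy M (f 0) ∧ f n = v ∧ Set.InjOn f (Set.Iic n) ∧
        IsAltWalk G M f n ∧ P n := by
  constructor
  · rintro ⟨u, l, hu, hl, hP⟩
    obtain ⟨f, rfl, rfl, hinj, hf⟩ := hl.exists_isAltWalk hu
    exact ⟨f, l.length - 1, hu, rfl, hinj, hf, by rwa [length_pathEdges] at hP⟩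
  · rintro ⟨f, n, hu, rfl, hinj, hf, hP⟩
    exact ⟨f 0, _, hu, hf.isAltPath_map_range hinj, by simpa [pathEdges_map_range] using hP⟩

end Paths

theorem not_evenVtx_and_oddVtx [Finite V] {G : SimpleGraph V} {M : Set (Sym2 V)}
    {side : V → Bool} (hG : IsBipartiteWith G side) (hM : IsMaxMatching G M) (v : V) :
    ¬(EvenVtx G M v ∧ OddVtx G M v) := by
  rintro ⟨hev, hodd⟩
  obtain ⟨f, k, hf0, rfl, -, hf, hk⟩ := exists_altPath_iff.1 hev
  obtain ⟨g, r, hg0, hgr, -, hg, hr⟩ := exists_altPath_iff.1 hodd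
  -- go along `g` to `f k`, then back along `f`: an odd alternating walk between unmatched vertices
  refine hM.not_isAugWalk hG (fun t => if t ≤ r then g t else f (r + k - t)) (r + k)
    ⟨fun t ht => ?_, hr.add_even hk, by simpa using hg0, ?_⟩
  · rcases lt_or_ge t r with htr | hrt
    · simp only [if_pos htr.le, if_pos (show t + 1 ≤ r by omega)]
      exact hg t htr
    have h₀ : (if t ≤ r then g t else f (r + k - t)) = f (r + k - t - 1 + 1) := by
      split_ifs with h
      · rw [show t = r by omega, hgr, show r + k - r - 1 + 1 = k by omega]
      · congr 1
        omega
    have h₁ : (if t + 1 ≤ r then g (t + 1) else f (r + k - (t + 1))) = f (r + k - t - 1) := by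
      rw [if_neg (by omega), Nat.sub_add_eq]
    rw [h₀, h₁, Sym2.eq_swap]
    refine ⟨(hf _ (by omega)).1.symm, (hf _ (by omega)).2.trans ?_⟩
    simp only [Nat.odd_iff, Nat.even_iff] at hr hk ⊢
    omega
  · split_ifs with h
    · rwa [show r + k = r by omega, hgr, show k = 0 by omega]
    · rwa [Nat.sub_self]

section DeleteVertex

variable {G : SimpleGraph V} {M : Set (Sym2 V)} {a : V}

theorem isMatchingIn_deleteIncidenceSet_iff {N : Set (Sym2 V)} :
    IsMatchingIn (G.deleteIncidenceSet a) N ↔ IsMatchingIn G N ∧ ¬IsMatchedBy N a := by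
  simp only [IsMatchingIn, edgeSet_deleteIncidenceSet, IsMatchedBy, Set.subset_def,
    Set.mem_sdiff, incidenceSet, Set.mem_ofPred_eq]
  constructor
  · rintro ⟨hsub, hdisj⟩
    exact ⟨⟨fun e he => (hsub e he).1, hdisj⟩,
      fun ⟨e, he, hae⟩ => (hsub e he).2 ⟨(hsub e he).1, hae⟩⟩
  · rintro ⟨⟨hsub, hdisj⟩, ha⟩
    exact ⟨fun e he => ⟨hsub e he, fun h => ha ⟨e, he, h.2⟩⟩, hdisj⟩

theorem IsMatchingIn.sdiff_deleteIncidenceSet (hM : IsMatchingIn G M) {p : V}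
    (hap : s(a, p) ∈ M) : IsMatchingIn (G.deleteIncidenceSet a) (M \ {s(a, p)}) :=
  isMatchingIn_deleteIncidenceSet_iff.2 ⟨⟨Set.sdiff_subset.trans hM.1, fun _ he _ he' =>
    hM.2 _ he.1 _ he'.1⟩, fun ⟨_, he, hae⟩ =>
      he.2 (hM.eq_of_mem he.1 hap hae (Sym2.mem_mk_left _ _))⟩

theorem exists_matchingIn_deleteIncidenceSet_of_oddVtx (hM : IsMatchingIn G M)
    (hMfin : M.Finite) {p : V} (hap : s(a, p) ∈ M) (hp : OddVtx G M p) :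
    ∃ N, IsMatchingIn (G.deleteIncidenceSet a) N ∧ N.ncard = M.ncard := by
  obtain ⟨f, n, hf0, rfl, hinj, hf, hn⟩ := exists_altPath_iff.1 hp
  have ha : ∀ j ≤ n, f j ≠ a := by
    rintro j hj rfl
    rcases Nat.eq_zero_or_pos j with rfl | hj0
    · exact hf0 ⟨_, hap, Sym2.mem_mk_left _ _⟩
    rcases hj.lt_or_eq with hjn | rfl
    · obtain ⟨t, htn, ⟨i, rfl⟩, -, he⟩ :=
        hf.exists_odd_edge_eq hM hap (Sym2.mem_mk_left _ _) hj0 hjn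
      have := (mem_edge_iff_of_injOn hinj le_rfl htn).1 (he ▸ Sym2.mem_mk_right _ _)
      obtain ⟨i', rfl⟩ := hn
      omega
    · exact G.irrefl (hM.1 hap)
  have hw : IsAugWalk (G.deleteIncidenceSet a) (M \ {s(a, f n)}) f n := by
    refine ⟨fun t ht => ?_, hn, fun ⟨e, he, h⟩ => hf0 ⟨e, he.1, h⟩,
      fun ⟨e, he, h⟩ => he.2 (hM.eq_of_mem he.1 hap h (Sym2.mem_mk_right _ _))⟩
    have hta := ha t (by omega)
    have hta' := ha (t + 1) (by omega)
    refine ⟨deleteIncidenceSet_adj.2 ⟨(hf t ht).1, hta, hta'⟩, ?_⟩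
    rw [Set.mem_sdiff, Set.mem_singleton_iff, (hf t ht).2, and_iff_left_iff_imp]
    intro _ h
    rcases Sym2.mem_iff.1 (h ▸ Sym2.mem_mk_left a (f n)) with h | h
    exacts [hta h.symm, hta' h.symm]
  obtain ⟨N, hN, hcard⟩ :=
    hw.exists_ncard_eq_succ (hM.sdiff_deleteIncidenceSet hap) hMfin.sdiff hinj
  exact ⟨N, hN, hcard.trans (Set.ncard_sdiff_singleton_add_one hap hMfin)⟩

end DeleteVertex

section TwoMatchings

variable {G : SimpleGraph V} {M N : Set (Sym2 V)} {f : ℕ → V} {n : ℕ}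

/-- `e` may be the `t`-th edge of a walk that takes edges of `M \ N` and of `N \ M` in turn,
starting with `M`. -/
def IsDiffAltEdge (M N : Set (Sym2 V)) (e : Sym2 V) (t : ℕ) : Prop :=
  (e ∈ M ↔ Even t) ∧ (e ∈ N ↔ Odd t)

def IsDiffAltWalk (M N : Set (Sym2 V)) (f : ℕ → V) (n : ℕ) : Prop :=
  ∀ t < n, IsDiffAltEdge M N s(f t, f (t + 1)) t

theorem IsDiffAltEdge.mem_edgeSet {e : Sym2 V} {t : ℕ} (he : IsDiffAltEdge M N e t)
    (hM : IsMatchingIn G M) (hN : IsMatchingIn G N) : e ∈ G.edgeSet := by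
  rcases Nat.even_or_odd t with ht | ht
  exacts [hM.1 (he.1.2 ht), hN.1 (he.2.2 ht)]

theorem IsDiffAltEdge.eq (hM : IsMatchingIn G M) (hN : IsMatchingIn G N) {e e' : Sym2 V}
    {t t' : ℕ} (he : IsDiffAltEdge M N e t) (he' : IsDiffAltEdge M N e' t')
    (htt' : Even t ↔ Even t') {x : V} (hxe : x ∈ e) (hxe' : x ∈ e') : e = e' := by
  rcases Nat.even_or_odd t with ht | ht
  · exact hM.eq_of_mem (he.1.2 ht) (he'.1.2 (htt'.1 ht)) hxe hxe'
  · have ht' : Odd t' := by rwa [← Nat.not_even_iff_odd, ← htt', Nat.not_even_iff_odd]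
    exact hN.eq_of_mem (he.2.2 ht) (he'.2.2 ht') hxe hxe'

theorem IsDiffAltWalk.apply_ne_of_next (hM : IsMatchingIn G M) (hN : IsMatchingIn G N)
    (hf : IsDiffAltWalk M N f n) (hinj : Set.InjOn f (Set.Iic n))
    (hf0 : ¬IsMatchedBy N (f 0)) {w : V} (hw : IsDiffAltEdge M N s(f n, w) n) :
    ∀ j ≤ n, f j ≠ w := by
  rintro j hj rfl
  rcases hj.lt_or_eq with hjn | rfl
  swap
  · exact G.irrefl (hw.mem_edgeSet hM hN)
  by_cases hpar : Even j ↔ Even n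
  · have := (mem_edge_iff_of_injOn hinj le_rfl hjn).1
      (hw.eq hM hN (hf j hjn) hpar.symm (Sym2.mem_mk_right _ _) (Sym2.mem_mk_left _ _)
        ▸ Sym2.mem_mk_left _ _)
    simp only [Nat.even_iff] at hpar
    omega
  rcases j with _ | i
  · exact hf0 ⟨_, hw.2.2 (by simpa [parity_simps] using hpar), Sym2.mem_mk_right _ _⟩
  have heq := hw.eq hM hN (hf i (by omega))
    (by simp only [Nat.even_iff] at hpar ⊢; omega) (Sym2.mem_mk_right _ _) (Sym2.mem_mk_right _ _)
  have := (mem_edge_iff_of_injOn hinj le_rfl (show i < n by omega)).1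
    (heq ▸ Sym2.mem_mk_left _ _)
  omega

theorem exists_isDiffAltWalk_maximal [Finite V] (hM : IsMatchingIn G M)
    (hN : IsMatchingIn G N) {a : V} (ha : ¬IsMatchedBy N a) :
    ∃ f n, f 0 = a ∧ Set.InjOn f (Set.Iic n) ∧ IsDiffAltWalk M N f n ∧
      ∀ w, ¬IsDiffAltEdge M N s(f n, w) n := by
  by_contra! h
  have hall (n : ℕ) :
      ∃ f : ℕ → V, f 0 = a ∧ Set.InjOn f (Set.Iic n) ∧ IsDiffAltWalk M N f n := by
    induction n with
    | zero => exact ⟨fun _ => a, rfl, by simp [Set.InjOn], fun t ht => absurd ht t.not_lt_zero⟩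
    | succ n ih =>
      obtain ⟨f, hf0, hinj, hf⟩ := ih
      obtain ⟨w, hw⟩ := h f n hf0 hinj hf
      have hne := hf.apply_ne_of_next hM hN hinj (hf0 ▸ ha) hw
      refine ⟨fun t => if t ≤ n then f t else w, by simpa, fun i hi j hj hij => ?_,
        fun t ht => ?_⟩
      · simp only [Set.mem_Iic] at hi hj
        simp only at hij
        split_ifs at hij with hin hjn hjn
        exacts [hinj hin hjn hij, absurd hij (hne i hin), absurd hij.symm (hne j hjn), by omega]
      · rcases (Nat.lt_succ_iff.1 ht).lt_or_eq with htn | rfl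
        · simpa [htn.le, Nat.succ_le_of_lt htn] using hf t htn
        · simpa using hw
  obtain ⟨f, -, hinj, -⟩ := hall (Nat.card V)
  have := hinj.ncard_image ▸ Set.ncard_le_card (f '' Set.Iic (Nat.card V))
  simp at this

theorem IsDiffAltWalk.oddVtx (hM : IsMatchingIn G M) (hN : IsMatchingIn G N)
    (hf : IsDiffAltWalk M N f n) (hinj : Set.InjOn f (Set.Iic n)) (hn : Even n) (hn0 : n ≠ 0)
    (hfn : ¬IsMatchedBy M (f n)) : OddVtx G M (f 1) := by
  refine exists_altPath_iff.2 ⟨fun t => f (n - t), n - 1, by simpa using hfn,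
    by simp [show n - (n - 1) = 1 by omega], fun i hi j hj hij => ?_, fun t ht => ?_,
    Nat.Even.sub_odd (by omega) hn odd_one⟩
  · simp only [Set.mem_Iic] at hi hj
    have := hinj (show n - i ≤ n by simp) (show n - j ≤ n by simp) hij
    omega
  · have hedge := hf (n - (t + 1)) (by omega)
    rw [show n - (t + 1) + 1 = n - t by omega] at hedge
    refine ⟨(hedge.mem_edgeSet hM hN).symm, ?_⟩
    rw [Sym2.eq_swap, hedge.1]
    simp only [← Nat.not_even_iff_odd, Nat.even_iff] at hn ⊢
    omega

theorem oddVtx_of_ncard_le [Finite V] (hM : IsMaxMatching G M) (hN : IsMatchingIn G N)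
    (hcard : M.ncard ≤ N.ncard) {a p : V} (hap : s(a, p) ∈ M) (ha : ¬IsMatchedBy N a) :
    OddVtx G M p := by
  obtain ⟨f, n, rfl, hinj, hf, hmax⟩ := exists_isDiffAltWalk_maximal hM.1 hN ha
  rcases Nat.even_or_odd n with hn | hn
  · have hfn : ¬IsMatchedBy M (f n) := by
      rintro ⟨e, he, hfe⟩
      obtain ⟨w, rfl⟩ := Sym2.mem_iff_exists.1 hfe
      refine hmax w
        ⟨iff_of_true he hn, iff_of_false (fun heN => ?_) (Nat.not_odd_iff_even.2 hn)⟩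
      rcases n with _ | n
      · exact ha ⟨_, heN, hfe⟩
      have hodd : Odd n := by simpa [parity_simps] using hn
      have := hN.eq_of_mem heN ((hf n (by omega)).2.2 hodd) hfe (Sym2.mem_mk_right _ _)
      exact Nat.not_even_iff_odd.2 hodd ((hf n (by omega)).1.1 (this ▸ he))
    have hn0 : n ≠ 0 := by
      rintro rfl
      exact hfn ⟨_, hap, Sym2.mem_mk_left _ _⟩
    have hp : f 1 = p := Sym2.congr_right.1 <| hM.1.eq_of_mem ((hf 0 (by omega)).1.2 ⟨0, rfl⟩)
      hap (Sym2.mem_mk_left _ _) (Sym2.mem_mk_left _ _)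
    exact hp ▸ hf.oddVtx hM.1 hN hinj hn hn0 hfn
  · have hfn : ¬IsMatchedBy N (f n) := by
      rintro ⟨e, he, hfe⟩
      obtain ⟨w, rfl⟩ := Sym2.mem_iff_exists.1 hfe
      refine hmax w
        ⟨iff_of_false (fun heM => ?_) (Nat.not_even_iff_odd.2 hn), iff_of_true he hn⟩
      obtain ⟨m, rfl⟩ := hn
      have := hM.1.eq_of_mem heM ((hf (2 * m) (by omega)).1.2 (even_two_mul m)) hfe
        (Sym2.mem_mk_right _ _)
      exact Nat.not_odd_iff_even.2 (even_two_mul m) ((hf (2 * m) (by omega)).2.1 (this ▸ he))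
    obtain ⟨N', hN', hcard'⟩ := IsAugWalk.exists_ncard_eq_succ hN N.toFinite
      ⟨fun t ht => ⟨(hf t ht).mem_edgeSet hM.1 hN, (hf t ht).2⟩, hn, ha, hfn⟩ hinj
    have := hM.2 N' hN'
    omega

end TwoMatchings

section MatchNum

variable [Finite V] {G : SimpleGraph V} {M : Set (Sym2 V)}

theorem bddAbove_matchingSizes : BddAbove {n | ∃ M, IsMatchingIn G M ∧ n = M.ncard} :=
  ⟨Nat.card (Sym2 V), by rintro _ ⟨M, -, rfl⟩; exact Set.ncard_le_card M⟩

theorem IsMatchingIn.ncard_le_matchNum (hM : IsMatchingIn G M) : M.ncard ≤ matchNum G :=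
  le_csSup bddAbove_matchingSizes ⟨M, hM, rfl⟩

theorem exists_ncard_eq_matchNum (G : SimpleGraph V) :
    ∃ M, IsMatchingIn G M ∧ M.ncard = matchNum G := by
  have hne : {n | ∃ M, IsMatchingIn G M ∧ n = M.ncard}.Nonempty :=
    ⟨0, ∅, ⟨Set.empty_subset _, by simp⟩, by simp⟩
  obtain ⟨M, hM, h⟩ := Nat.sSup_mem hne bddAbove_matchingSizes
  exact ⟨M, hM, h.symm⟩

theorem IsMaxMatching.ncard_eq_matchNum (hM : IsMaxMatching G M) : M.ncard = matchNum G := by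
  obtain ⟨N, hN, h⟩ := exists_ncard_eq_matchNum G
  exact le_antisymm hM.1.ncard_le_matchNum (h ▸ hM.2 N hN)

theorem matchNum_mono {H : SimpleGraph V} (hHG : H ≤ G) : matchNum H ≤ matchNum G := by
  obtain ⟨M, hM, h⟩ := exists_ncard_eq_matchNum H
  exact h ▸ IsMatchingIn.ncard_le_matchNum ⟨hM.1.trans (edgeSet_mono hHG), hM.2⟩

theorem IsMatchingIn.isMaxMatching (hM : IsMatchingIn G M) (h : matchNum G ≤ M.ncard) :
    IsMaxMatching G M :=
  ⟨hM, fun _ hN => hN.ncard_le_matchNum.trans h⟩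

end MatchNum

/-- Let `M` be a maximum matching of the bipartite graph `G`, let
`a` be matched in `M` with partner `p`, and let `H` be obtained from `G` by
deleting `a` and all edges incident on it. Then the maximum matching size of `H`
equals that of `G` if and only if `p` is odd with respect to `M` in `G`; and if
`p` is even or unreachable with respect to `M` in `G`, then `M \ {s(a,p)}` is a
maximum matching of `H` (so the maximum matching size drops by exactly one). -/
theorem delete_matched_vertex [Fintype V]
    (G H : SimpleGraph V) (side : V → Bool) (hbip : IsBipartiteWith G side)
    (M : Set (Sym2 V)) (hM : IsMaxMatching G M)
    (a p : V) (hap : s(a, p) ∈ M)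
    (hH : ∀ u v, H.Adj u v ↔ G.Adj u v ∧ u ≠ a ∧ v ≠ a) :
    (matchNum H = matchNum G ↔ OddVtx G M p) ∧
    ((EvenVtx G M p ∨ UnreachableVtx G M p) →
      (IsMaxMatching H (M \ {s(a, p)}) ∧ matchNum H + 1 = matchNum G)) := by
  obtain rfl : H = G.deleteIncidenceSet a :=
    SimpleGraph.ext <| funext₂ fun u v => propext <| (hH u v).trans deleteIncidenceSet_adj.symm
  rw [← hM.ncard_eq_matchNum]
  have hle := hM.ncard_eq_matchNum ▸ matchNum_mono (G.deleteIncidenceSet_le a)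
  have hiff : matchNum (G.deleteIncidenceSet a) = M.ncard ↔ OddVtx G M p := by
    refine ⟨fun h => ?_, fun hp => ?_⟩
    · obtain ⟨N, hN, hNc⟩ := exists_ncard_eq_matchNum (G.deleteIncidenceSet a)
      rw [isMatchingIn_deleteIncidenceSet_iff] at hN
      exact oddVtx_of_ncard_le hM hN.1 (by omega) hap hN.2
    · obtain ⟨N, hN, hNc⟩ :=
        exists_matchingIn_deleteIncidenceSet_of_oddVtx hM.1 M.toFinite hap hp
      exact le_antisymm hle (hNc ▸ hN.ncard_le_matchNum)
  refine ⟨hiff, fun hp => ?_⟩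
  have hodd : ¬OddVtx G M p := by
    rcases hp with hev | hun
    · exact fun hodd => not_evenVtx_and_oddVtx hbip hM p ⟨hev, hodd⟩
    · exact fun ⟨u, l, hu, hl, _⟩ => hun ⟨u, l, hu, hl⟩
  have hM' := hM.1.sdiff_deleteIncidenceSet hap
  have hge := hM'.ncard_le_matchNum
  have hcard := Set.ncard_sdiff_singleton_add_one hap M.toFinite
  have hne := mt hiff.1 hodd
  exact ⟨hM'.isMaxMatching (by omega), by omega⟩
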